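/- arXiv:0709.3415 — 2 statements merged into one kernel-verified Lean document; each statement's English description precedes it below -/
import Mathlib

section
/- Let A' and A be ℤ-graded rings with additive maps ∂' : A' → A' and ∂ : A → A, each squaring to zero and each satisfying the graded Leibniz rule for its grading, and let π : A' →+* A be a ring homomorphism with π ∘ ∂' = ∂ ∘ π. If the homology of (A', ∂') vanishes (every ∂'-cycle is a ∂'-boundary), then the homology of (A, ∂) vanishes (every ∂-cycle is a ∂-boundary). (This is the mechanism behind the implications (ii) ⇒ (i), (iii) ⇒ (i) and (n+iii) ⇒ (n) of the paper's main theorem.) -/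
/-! A graded derivation kills `1`, so acyclicity of `A'` writes `1 = d' c'`. Then `x = π c'`
satisfies `d x = 1`, and for a `d`-cycle `b` the Leibniz rule gives `d (x * b) = d x * b = b`. -/

section GradedLeibniz

variable {A : Type*} [Ring A] (𝒜 : ℤ → AddSubgroup A) (d : A →+ A)

theorem map_one_eq_zero_of_graded_leibniz [SetLike.GradedOne 𝒜]
    (hLeib : ∀ (i : ℤ) (a : A), a ∈ 𝒜 i → ∀ b : A,
      d (a * b) = d a * b + ((-1 : ℤˣ) ^ i) • (a * d b)) :
    d 1 = 0 := by
  have h := hLeib 0 1 SetLike.GradedOne.one_mem 1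
  simp only [one_mul, mul_one, zpow_zero, one_smul] at h
  exact left_eq_add.mp h

theorem map_mul_cycle_of_graded_leibniz [DirectSum.Decomposition 𝒜]
    (hLeib : ∀ (i : ℤ) (a : A), a ∈ 𝒜 i → ∀ b : A,
      d (a * b) = d a * b + ((-1 : ℤˣ) ^ i) • (a * d b))
    {b : A} (hb : d b = 0) (a : A) :
    d (a * b) = d a * b := by
  induction a using DirectSum.Decomposition.inductionOn 𝒜 with
  | zero => simp
  | @homogeneous i a => rw [hLeib i a a.2 b, hb, mul_zero, smul_zero, add_zero]
  | add u v hu hv => rw [add_mul, map_add, map_add, hu, hv, add_mul]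

theorem exists_map_eq_of_map_eq_one_of_graded_leibniz [DirectSum.Decomposition 𝒜]
    (hLeib : ∀ (i : ℤ) (a : A), a ∈ 𝒜 i → ∀ b : A,
      d (a * b) = d a * b + ((-1 : ℤˣ) ^ i) • (a * d b))
    {x : A} (hx : d x = 1) {b : A} (hb : d b = 0) :
    ∃ c : A, d c = b :=
  ⟨x * b, by rw [map_mul_cycle_of_graded_leibniz 𝒜 d hLeib hb, hx, one_mul]⟩

end GradedLeibniz

theorem homology_vanishes_of_chain_map_general {A' A : Type*} [Ring A'] [Ring A]
    (𝒜' : ℤ → AddSubgroup A') (𝒜 : ℤ → AddSubgroup A)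
    [GradedRing 𝒜'] [GradedRing 𝒜]
    (d' : A' →+ A') (d : A →+ A)
    (hLeib' : ∀ (i : ℤ) (a : A'), a ∈ 𝒜' i → ∀ b : A',
      d' (a * b) = d' a * b + ((-1 : ℤˣ) ^ i) • (a * d' b))
    (hLeib : ∀ (i : ℤ) (a : A), a ∈ 𝒜 i → ∀ b : A,
      d (a * b) = d a * b + ((-1 : ℤˣ) ^ i) • (a * d b))
    (π : A' →+* A) (hchain : ∀ x : A', π (d' x) = d (π x))
    (hvan' : ∀ b : A', d' b = 0 → ∃ c : A', d' c = b) :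
    ∀ b : A, d b = 0 → ∃ c : A, d c = b := by
  intro b hb
  obtain ⟨c', hc'⟩ := hvan' 1 (map_one_eq_zero_of_graded_leibniz 𝒜' d' hLeib')
  have hx : d (π c') = 1 := by rw [← hchain, hc', map_one]
  exact exists_map_eq_of_map_eq_one_of_graded_leibniz 𝒜 d hLeib hx hb

/-- If `π : A' →+* A` is a ring homomorphism intertwining the differentials of
two ℤ-graded differential graded algebras, and the homology of `(A', d')`
vanishes, then the homology of `(A, d)` vanishes. -/
theorem homology_vanishes_of_chain_map {A' A : Type*} [Ring A'] [Ring A]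
    (𝒜' : ℤ → AddSubgroup A') (𝒜 : ℤ → AddSubgroup A)
    [GradedRing 𝒜'] [GradedRing 𝒜]
    (d' : A' →+ A') (d : A →+ A)
    (hd'2 : ∀ x : A', d' (d' x) = 0) (hd2 : ∀ x : A, d (d x) = 0)
    (hLeib' : ∀ (i : ℤ) (a : A'), a ∈ 𝒜' i → ∀ b : A',
      d' (a * b) = d' a * b + ((-1 : ℤˣ) ^ i) • (a * d' b))
    (hLeib : ∀ (i : ℤ) (a : A), a ∈ 𝒜 i → ∀ b : A,
      d (a * b) = d a * b + ((-1 : ℤˣ) ^ i) • (a * d b))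
    (π : A' →+* A) (hchain : ∀ x : A', π (d' x) = d (π x))
    (hvan' : ∀ b : A', d' b = 0 → ∃ c : A', d' c = b) :
    ∀ b : A, d b = 0 → ∃ c : A, d c = b :=
  homology_vanishes_of_chain_map_general 𝒜' 𝒜 d' d hLeib' hLeib π hchain hvan'
end

section
/- Let A be a ℤ-graded ring and ∂ : A → A an additive map with ∂ ∘ ∂ = 0 satisfying the graded Leibniz rule. If u is a unit of A (u : Aˣ) and f₀ ∈ A satisfies ∂(f₀) = u, then ∂(f₀ * ↑u⁻¹) = 1. (This is the paper's computation d(f₀·(1−g)⁻¹) = (1−g)·(1−g)⁻¹ = 1 with u = 1−g, which proves the implications (i) ⇒ (ii), (i) ⇒ (iii) and (n) ⇒ (n+iii) of the main theorem.) -/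
/-!
On homogeneous `a` the Leibniz rule reads `d (a * b) = d a * b` as soon as `d b = 0`, and by
additivity this extends to all `a`. Now `u = d f₀` is a cycle because `d ∘ d = 0`, hence so is
`u⁻¹` (from `0 = d 1 = d (u⁻¹ * u) = d u⁻¹ * u`), and `d (f₀ * u⁻¹) = u * u⁻¹ = 1`.
-/

section GradedLeibniz

variable {A : Type*} [Ring A] (𝒜 : ℤ → AddSubgroup A) (d : A →+ A)

def IsGradedLeibniz : Prop :=
  ∀ (i : ℤ) (a : A), a ∈ 𝒜 i → ∀ b : A, d (a * b) = d a * b + ((-1 : ℤˣ) ^ i) • (a * d b)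

variable {𝒜 d}

namespace IsGradedLeibniz

theorem map_one_eq_zero [SetLike.GradedOne 𝒜] (h : IsGradedLeibniz 𝒜 d) : d 1 = 0 := by
  have h11 : d 1 = d 1 + d 1 := by
    simpa using h 0 1 SetLike.GradedOne.one_mem 1
  simpa using h11.symm

theorem map_mul_of_map_eq_zero [GradedRing 𝒜] (h : IsGradedLeibniz 𝒜 d) {b : A}
    (hb : d b = 0) (x : A) : d (x * b) = d x * b := by
  induction x using DirectSum.Decomposition.inductionOn 𝒜 with
  | zero => simp
  | @homogeneous i a => rw [h i a a.2 b, hb, mul_zero, smul_zero, add_zero]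
  | add x y hx hy => rw [add_mul, map_add, hx, hy, map_add, add_mul]

theorem map_units_inv_of_map_eq_zero [GradedRing 𝒜] (h : IsGradedLeibniz 𝒜 d) {u : Aˣ}
    (hu : d u = 0) : d ↑u⁻¹ = 0 :=
  calc d ↑u⁻¹ = d ↑u⁻¹ * u * ↑u⁻¹ := by rw [mul_assoc, Units.mul_inv, mul_one]
    _ = d (↑u⁻¹ * u) * ↑u⁻¹ := by rw [h.map_mul_of_map_eq_zero hu]
    _ = 0 := by rw [Units.inv_mul, h.map_one_eq_zero, zero_mul]

end IsGradedLeibniz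

end GradedLeibniz

/-- In a ℤ-graded ring with a differential `d` (additive, `d ∘ d = 0`, graded
Leibniz rule), if `d f₀ = u` for a unit `u`, then `d (f₀ * ↑u⁻¹) = 1`. -/
theorem primitive_of_unit_from_primitive_of_invertible {A : Type*} [Ring A]
    (𝒜 : ℤ → AddSubgroup A) [GradedRing 𝒜] (d : A →+ A)
    (hd2 : ∀ x : A, d (d x) = 0)
    (hLeib : ∀ (i : ℤ) (a : A), a ∈ 𝒜 i → ∀ b : A,
      d (a * b) = d a * b + ((-1 : ℤˣ) ^ i) • (a * d b))
    (u : Aˣ) (f₀ : A) (hf₀ : d f₀ = (u : A)) :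
    d (f₀ * ((u⁻¹ : Aˣ) : A)) = 1 := by
  have hd : IsGradedLeibniz 𝒜 d := hLeib
  have hu : d u = 0 := by rw [← hf₀, hd2]
  rw [hd.map_mul_of_map_eq_zero (hd.map_units_inv_of_map_eq_zero hu), hf₀,
    Units.mul_inv]
end
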